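/- arXiv:2507.22091 — 3 statements merged into one kernel-verified Lean document; each statement's English description precedes it below -/
import Mathlib

section
/- Let λ₁ ≤ ⋯ ≤ λ_N be real numbers (N = dim Λ²V for a Euclidean space V), let 𝔯 : Λ²V → Λ²V be the self-adjoint operator with eigenvalues λᵢ and orthonormal eigenbasis Ξᵢ, and let T̂ be a vector in Λ²V-valued tensors with components T̂ᵢ = ⟨Ξᵢ, T̂⟩ satisfying |T̂ᵢ|² ≤ (1/C)|T̂|² for some real C ≥ 1 and all i. If κ ≤ 0 and (λ₁ + ⋯ + λ_{⌊C⌋})/⌊C⌋ ≥ κ, then ⟨𝔯(T̂), T̂⟩ ≥ κ |T̂|². -/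
open scoped RealInnerProductSpace

/-- Petersen–Wink Lemma 2.1: if `𝔯` is self-adjoint with ordered eigenvalues `λ₁ ≤ ⋯ ≤ λ_N`
and orthonormal eigenbasis `Ξ`, the components of `T̂` satisfy `|T̂ᵢ|² ≤ (1/C)|T̂|²` with
`C ≥ 1`, `κ ≤ 0` and the average of the lowest `⌊C⌋` eigenvalues is at least `κ`, then
`⟨𝔯(T̂), T̂⟩ ≥ κ |T̂|²`. -/
theorem stmt1 {E : Type} [NormedAddCommGroup E] [InnerProductSpace ℝ E]
    [FiniteDimensional ℝ E]
    (N : ℕ) (hN : Module.finrank ℝ E = N)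
    (lam : Fin N → ℝ) (hmono : Monotone lam)
    (Ξ : OrthonormalBasis (Fin N) ℝ E)
    (frakR : E →ₗ[ℝ] E) (heig : ∀ i, frakR (Ξ i) = lam i • Ξ i)
    (C : ℝ) (hC : 1 ≤ C)
    (T : E)
    (hcomp : ∀ i, ⟪Ξ i, T⟫ ^ 2 ≤ (1 / C) * ‖T‖ ^ 2)
    (κ : ℝ) (hκ : κ ≤ 0)
    (havg : κ ≤ (∑ i ∈ Finset.univ.filter (fun i : Fin N => (i : ℕ) < Nat.floor C), lam i) /
      (Nat.floor C : ℝ)) :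
    κ * ‖T‖ ^ 2 ≤ ⟪frakR T, T⟫ := by
  set a : Fin N → ℝ := fun i => ⟪Ξ i, T⟫ with ha
  have hC0 : (0:ℝ) < C := lt_of_lt_of_le one_pos hC
  -- norm identity
  have hnorm : ‖T‖ ^ 2 = ∑ i, a i ^ 2 := by
    rw [← real_inner_self_eq_norm_sq, ← Ξ.sum_inner_mul_inner T T]
    exact Finset.sum_congr rfl fun i _ => by simp only [ha, real_inner_comm T (Ξ i)]; ring
  -- quadratic form identity
  have hquad : ⟪frakR T, T⟫ = ∑ i, lam i * a i ^ 2 := by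
    have hT : (∑ i, a i • Ξ i) = T := by
      simpa [ha, Ξ.repr_apply_apply] using Ξ.sum_repr T
    calc ⟪frakR T, T⟫ = ⟪frakR (∑ i, a i • Ξ i), T⟫ := by rw [hT]
      _ = ∑ i, lam i * a i ^ 2 := by
          rw [map_sum]
          rw [sum_inner]
          apply Finset.sum_congr rfl
          intro i _
          rw [map_smul, heig i, real_inner_smul_left, real_inner_smul_left]
          ring
  -- case T = 0
  rcases eq_or_ne T 0 with rfl | hT0
  · simp [hκ, mul_nonpos_of_nonpos_of_nonneg hκ (sq_nonneg _)]
  have ht0 : (0:ℝ) < ‖T‖ ^ 2 := by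
    have := norm_pos_iff.mpr hT0
    positivity
  set m := Nat.floor C with hm
  have hm1 : 1 ≤ m := Nat.le_floor (by exact_mod_cast hC)
  have hmC : (m:ℝ) ≤ C := Nat.floor_le hC0.le
  -- m ≤ N
  have hCN : C ≤ N := by
    have h1 : ‖T‖ ^ 2 ≤ (N:ℝ) * ((1 / C) * ‖T‖ ^ 2) := by
      calc ‖T‖ ^ 2 = ∑ i, a i ^ 2 := hnorm
        _ ≤ ∑ _i : Fin N, (1 / C) * ‖T‖ ^ 2 := Finset.sum_le_sum fun i _ => hcomp i
        _ = (N:ℝ) * ((1 / C) * ‖T‖ ^ 2) := by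
            simp [Finset.sum_const, nsmul_eq_mul]
    have h2 : C * ‖T‖ ^ 2 ≤ (N:ℝ) * ‖T‖ ^ 2 := by
      have h3 := mul_le_mul_of_nonneg_left h1 hC0.le
      calc C * ‖T‖ ^ 2 ≤ C * ((N:ℝ) * (1 / C * ‖T‖ ^ 2)) := h3
        _ = (N:ℝ) * ‖T‖ ^ 2 := by field_simp
    exact le_of_mul_le_mul_right h2 ht0
  have hmN : m ≤ N := Nat.le_trans (Nat.floor_le_floor hCN) (by simp)
  set μ := lam ⟨m - 1, by omega⟩ with hμ
  set F := Finset.univ.filter (fun i : Fin N => (i : ℕ) < m) with hF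
  set S := ∑ i ∈ F, lam i with hS
  have hcard : F.card = m := by
    rcases eq_or_lt_of_le hmN with heq | hlt
    · have : F = Finset.univ := by
        rw [hF]; ext i; simp; omega
      rw [this, Finset.card_univ, Fintype.card_fin, heq]
    · have : F = Finset.Iio (⟨m, hlt⟩ : Fin N) := by
        rw [hF]; ext i; simp [Fin.lt_def]
      rw [this, Fin.card_Iio]
  -- μ ≥ κ
  have hSm : (m:ℝ) * κ ≤ S := by
    have hm0 : (0:ℝ) < m := by exact_mod_cast hm1
    rw [le_div_iff₀ hm0] at havg
    · linarith [havg]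
  have hμκ : κ ≤ μ := by
    have : S ≤ (m:ℝ) * μ := by
      rw [← hcard, ← nsmul_eq_mul, ← Finset.sum_const]
      apply Finset.sum_le_sum
      intro i hi
      rw [hF, Finset.mem_filter] at hi
      obtain ⟨-, hi⟩ := hi
      exact hmono (by simp only [Fin.le_def]; omega)
    have hm0 : (0:ℝ) < m := by exact_mod_cast hm1
    nlinarith
  -- main chain
  have key : μ * ‖T‖ ^ 2 + (S - m * μ) * (‖T‖ ^ 2 / C) ≤ ⟪frakR T, T⟫ := by
    rw [hquad]
    have step1 : ∑ i ∈ F, (lam i - μ) * a i ^ 2 ≤ ∑ i, (lam i - μ) * a i ^ 2 := by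
      apply Finset.sum_le_sum_of_subset_of_nonneg (Finset.subset_univ F)
      intro i _ hi
      rw [hF, Finset.mem_filter] at hi
      push_neg at hi
      have hmi : m ≤ (i:ℕ) := hi (Finset.mem_univ i)
      have : μ ≤ lam i := hmono (by simp only [Fin.le_def]; omega)
      nlinarith [sq_nonneg (a i)]
    have step2 : ∑ i ∈ F, (lam i - μ) * (‖T‖ ^ 2 / C) ≤ ∑ i ∈ F, (lam i - μ) * a i ^ 2 := by
      apply Finset.sum_le_sum
      intro i hi
      rw [hF, Finset.mem_filter] at hi
      obtain ⟨-, hi⟩ := hi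
      have h1 : lam i ≤ μ := hmono (by simp only [Fin.le_def]; omega)
      have h2 : a i ^ 2 ≤ ‖T‖ ^ 2 / C := by
        simpa [ha, one_div, div_eq_inv_mul] using hcomp i
      nlinarith
    have hsum2 : ∑ i ∈ F, (lam i - μ) * (‖T‖ ^ 2 / C) = (S - m * μ) * (‖T‖ ^ 2 / C) := by
      rw [← Finset.sum_mul, hS, Finset.sum_sub_distrib, Finset.sum_const, hcard, nsmul_eq_mul]
    have hexp : ∑ i, lam i * a i ^ 2 = μ * ‖T‖ ^ 2 + ∑ i, (lam i - μ) * a i ^ 2 := by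
      rw [hnorm, Finset.mul_sum, ← Finset.sum_add_distrib]
      apply Finset.sum_congr rfl; intro i _; ring
    rw [hexp]
    linarith [le_trans (hsum2 ▸ step2) step1]
  have final : κ * ‖T‖ ^ 2 ≤ μ * ‖T‖ ^ 2 + (S - m * μ) * (‖T‖ ^ 2 / C) := by
    rw [div_eq_mul_inv, ← mul_assoc]
    have hCinv : (0:ℝ) < C⁻¹ := by positivity
    have h : κ * C ≤ μ * C + (S - m * μ) := by nlinarith
    have := mul_le_mul_of_nonneg_right h (mul_nonneg ht0.le hCinv.le)
    calc κ * ‖T‖ ^ 2 = κ * C * (‖T‖^2 * C⁻¹) := by field_simp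
      _ ≤ (μ * C + (S - m*μ)) * (‖T‖^2 * C⁻¹) := this
      _ = μ * ‖T‖^2 + (S - m*μ) * ‖T‖^2 * C⁻¹ := by field_simp
  linarith
end

section
/- Let A be a self-adjoint operator on an N-dimensional real inner product space with eigenvalues λ₁ ≤ ⋯ ≤ λ_N, and let v = Σᵢ vᵢ eᵢ in an orthonormal eigenbasis. If there exists m with 1 ≤ m ≤ N such that |vᵢ|² ≤ (1/m)|v|² for all i, and λ₁ + ⋯ + λ_m > 0, then ⟨A v, v⟩ > 0 unless v = 0. -/
open scoped RealInnerProductSpace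

/-- If `A` is self-adjoint on an `N`-dimensional real inner product space with ordered
eigenvalues `λ₁ ≤ ⋯ ≤ λ_N`, each eigencomponent of `v` satisfies `|vᵢ|² ≤ (1/m)|v|²` for
some `1 ≤ m ≤ N`, and `λ₁ + ⋯ + λ_m > 0`, then `⟨A v, v⟩ > 0` unless `v = 0`. -/
theorem stmt2 {E : Type} [NormedAddCommGroup E] [InnerProductSpace ℝ E]
    [FiniteDimensional ℝ E]
    (N : ℕ) (hN : Module.finrank ℝ E = N)
    (lam : Fin N → ℝ) (hmono : Monotone lam)
    (e : OrthonormalBasis (Fin N) ℝ E)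
    (A : E →ₗ[ℝ] E) (heig : ∀ i, A (e i) = lam i • e i)
    (m : ℕ) (hm1 : 1 ≤ m) (hmN : m ≤ N)
    (v : E)
    (hcomp : ∀ i, ⟪e i, v⟫ ^ 2 ≤ (1 / (m : ℝ)) * ‖v‖ ^ 2)
    (hpos : 0 < ∑ i ∈ Finset.univ.filter (fun i : Fin N => (i : ℕ) < m), lam i) :
    v ≠ 0 → 0 < ⟪A v, v⟫ := by
  intro hv
  set c : Fin N → ℝ := fun i => ⟪e i, v⟫ with hc
  have hv2 : (0 : ℝ) < ‖v‖ ^ 2 := by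
    have := norm_pos_iff.mpr hv
    positivity
  have hm0 : (0 : ℝ) < (m : ℝ) := by exact_mod_cast hm1
  set t : ℝ := (1 / (m : ℝ)) * ‖v‖ ^ 2 with ht
  have ht0 : 0 < t := by positivity
  have hrepr : ∑ i, c i • e i = v := e.sum_repr' v
  have hAv : ⟪A v, v⟫ = ∑ i, lam i * (c i) ^ 2 := by
    nth_rewrite 1 [← hrepr]
    rw [map_sum, sum_inner]
    refine Finset.sum_congr rfl fun i _ => ?_
    rw [map_smul, heig i, smul_smul, real_inner_smul_left]
    simp only [hc]
    ring
  have hnorm : ∑ i, (c i) ^ 2 = ‖v‖ ^ 2 := by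
    have : ⟪v, v⟫ = ∑ i, (c i) ^ 2 := by
      nth_rewrite 1 [← hrepr]
      rw [sum_inner]
      refine Finset.sum_congr rfl fun i _ => ?_
      rw [real_inner_smul_left]
      simp only [hc]
      ring
    rw [← this, real_inner_self_eq_norm_sq]
  set S : Finset (Fin N) := Finset.univ.filter (fun i : Fin N => (i : ℕ) < m) with hS
  have hSIic : S = Finset.Iic (⟨m - 1, by omega⟩ : Fin N) := by
    ext i
    simp only [hS, Finset.mem_filter, Finset.mem_univ, true_and, Finset.mem_Iic, Fin.le_def]
    show _ ↔ (i : ℕ) ≤ m - 1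
    omega
  have hcard : S.card = m := by
    rw [hSIic, Fin.card_Iic]
    show m - 1 + 1 = m
    omega
  set μ : ℝ := lam ⟨m - 1, by omega⟩ with hμ
  have hle : ∀ i ∈ S, lam i ≤ μ := fun i hi => by
    apply hmono
    simp only [hS, Finset.mem_filter, Finset.mem_univ, true_and] at hi
    rw [Fin.le_def]
    show (i : ℕ) ≤ m - 1
    omega
  have hge : ∀ i ∉ S, μ ≤ lam i := fun i hi => by
    apply hmono
    simp only [hS, Finset.mem_filter, Finset.mem_univ, true_and, not_lt] at hi
    rw [Fin.le_def]
    show m - 1 ≤ (i : ℕ)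
    omega
  have key : t * ∑ i ∈ S, lam i ≤ ∑ i, lam i * (c i) ^ 2 := by
    have h1 : ∑ i ∈ S, μ * ((c i) ^ 2 - t) ≤ ∑ i ∈ S, lam i * ((c i) ^ 2 - t) := by
      refine Finset.sum_le_sum fun i hi => ?_
      exact mul_le_mul_of_nonpos_right (hle i hi) (by linarith [hcomp i])
    have h2 : ∑ i ∈ Sᶜ, μ * (c i) ^ 2 ≤ ∑ i ∈ Sᶜ, lam i * (c i) ^ 2 := by
      refine Finset.sum_le_sum fun i hi => ?_
      exact mul_le_mul_of_nonneg_right (hge i (Finset.mem_compl.mp hi)) (sq_nonneg _)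
    have hsplit : ∑ i ∈ S, lam i * (c i) ^ 2 + ∑ i ∈ Sᶜ, lam i * (c i) ^ 2
        = ∑ i, lam i * (c i) ^ 2 := Finset.sum_add_sum_compl S _
    have hsplit2 : ∑ i ∈ S, (c i) ^ 2 + ∑ i ∈ Sᶜ, (c i) ^ 2 = ∑ i, (c i) ^ 2 :=
      Finset.sum_add_sum_compl S _
    have hmt : (m : ℝ) * t = ‖v‖ ^ 2 := by
      rw [ht]; field_simp
    have habm : (∑ i ∈ S, (c i) ^ 2) + (∑ i ∈ Sᶜ, (c i) ^ 2) - (m : ℝ) * t = 0 := by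
      linarith [hsplit2, hnorm, hmt]
    have e1 : ∑ i ∈ S, μ * ((c i) ^ 2 - t)
        = μ * ((∑ i ∈ S, (c i) ^ 2) - (m : ℝ) * t) := by
      rw [← Finset.mul_sum, Finset.sum_sub_distrib, Finset.sum_const, hcard, nsmul_eq_mul]
    have e2 : ∑ i ∈ Sᶜ, μ * (c i) ^ 2 = μ * ∑ i ∈ Sᶜ, (c i) ^ 2 :=
      (Finset.mul_sum _ _ _).symm
    have e3 : ∑ i ∈ S, lam i * ((c i) ^ 2 - t)
        = (∑ i ∈ S, lam i * (c i) ^ 2) - t * ∑ i ∈ S, lam i := by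
      simp only [mul_sub]
      rw [Finset.sum_sub_distrib]
      congr 1
      rw [Finset.mul_sum]
      exact Finset.sum_congr rfl fun i _ => mul_comm _ _
    have h0 : μ * ((∑ i ∈ S, (c i) ^ 2) - (m : ℝ) * t) + μ * ∑ i ∈ Sᶜ, (c i) ^ 2 = 0 := by
      linear_combination μ * habm
    rw [e1] at h1
    rw [e2] at h2
    rw [e3] at h1
    linarith [h1, h2, h0, hsplit]
  rw [hAv]
  calc (0 : ℝ) < t * ∑ i ∈ S, lam i := by positivity
    _ ≤ _ := key
end

section
/- Let ν > 1 and x ≥ 0 be real numbers. Then the infinite product Π_{i=0}^{∞} (x νⁱ (2νⁱ − 1)^{−1/2} + 1)^{2ν^{−i}} converges, and for 0 ≤ x ≤ 1 it is bounded above by exp(2x√ν/(√ν − 1)). -/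
/-- The infinite product `B(n, ν, x) = Π_{i=0}^{∞} (x νⁱ (2νⁱ − 1)^{−1/2} + 1)^{2ν^{−i}}`
converges for `ν > 1`, `x ≥ 0`, and for `0 ≤ x ≤ 1` it is bounded by
`exp(2x√ν/(√ν − 1))`. -/
theorem stmt5 (ν x : ℝ) (hν : 1 < ν) (hx : 0 ≤ x) :
    Multipliable (fun i : ℕ =>
      (x * ν ^ i * (2 * ν ^ i - 1) ^ (-(1 : ℝ) / 2) + 1) ^ (2 * (ν⁻¹ ^ i) : ℝ)) ∧
    (x ≤ 1 →
      (∏' i : ℕ, (x * ν ^ i * (2 * ν ^ i - 1) ^ (-(1 : ℝ) / 2) + 1) ^ (2 * (ν⁻¹ ^ i) : ℝ)) ≤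
        Real.exp (2 * x * Real.sqrt ν / (Real.sqrt ν - 1))) := by
  have hν0 : (0:ℝ) < ν := by linarith
  have hνi : ∀ i : ℕ, (1:ℝ) ≤ ν ^ i := fun i => one_le_pow₀ hν.le
  have hs1 : 1 < Real.sqrt ν := by
    rw [show (1:ℝ) = Real.sqrt 1 by simp]
    exact Real.sqrt_lt_sqrt (by norm_num) hν
  set r : ℝ := (Real.sqrt ν)⁻¹ with hr
  have hr0 : 0 < r := inv_pos.2 (by linarith)
  have hr1 : r < 1 := inv_lt_one_of_one_lt₀ hs1
  set a : ℕ → ℝ := fun i => x * ν ^ i * (2 * ν ^ i - 1) ^ (-(1 : ℝ) / 2) + 1 with ha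
  have hsub : ∀ i : ℕ, (0:ℝ) < 2 * ν ^ i - 1 := fun i => by have := hνi i; linarith
  have ha1 : ∀ i, (1:ℝ) ≤ a i := by
    intro i
    have : 0 ≤ x * ν ^ i * (2 * ν ^ i - 1) ^ (-(1 : ℝ) / 2) :=
      mul_nonneg (mul_nonneg hx (by positivity)) (Real.rpow_pos_of_pos (hsub i) _).le
    simp only [ha]; linarith
  have ha0 : ∀ i, (0:ℝ) < a i := fun i => lt_of_lt_of_le one_pos (ha1 i)
  set g : ℕ → ℝ := fun i => Real.log (a i) * (2 * (ν⁻¹ ^ i)) with hg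
  -- key bound : g i ≤ 2 * x * r ^ i
  have hc : ∀ i : ℕ, (2 * ν ^ i - 1) ^ (-(1 : ℝ) / 2) ≤ r ^ i := by
    intro i
    have h1 : (2 * ν ^ i - 1) ^ (-(1 : ℝ) / 2) = (Real.sqrt (2 * ν ^ i - 1))⁻¹ := by
      rw [show (-(1:ℝ)/2) = -(1/2) by ring, Real.rpow_neg (hsub i).le,
        ← Real.sqrt_eq_rpow]
    have hsq : Real.sqrt (ν ^ i) = Real.sqrt ν ^ i := by
      rw [Real.sqrt_eq_rpow, Real.sqrt_eq_rpow, ← Real.rpow_natCast ν i,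
        ← Real.rpow_mul hν0.le, mul_comm, Real.rpow_mul hν0.le, Real.rpow_natCast]
    have h2 : r ^ i = (Real.sqrt (ν ^ i))⁻¹ := by
      rw [hr, inv_pow, hsq]
    rw [h1, h2]
    apply inv_anti₀
    · exact Real.sqrt_pos.2 (by positivity)
    · exact Real.sqrt_le_sqrt (by have := hνi i; linarith)
  have hgb : ∀ i : ℕ, g i ≤ 2 * x * r ^ i := by
    intro i
    have hlog : Real.log (a i) ≤ x * ν ^ i * (2 * ν ^ i - 1) ^ (-(1 : ℝ) / 2) := by
      have := Real.log_le_sub_one_of_pos (ha0 i)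
      simpa [ha] using this
    have hp : (0:ℝ) ≤ 2 * (ν⁻¹ ^ i) := by positivity
    calc g i ≤ (x * ν ^ i * (2 * ν ^ i - 1) ^ (-(1 : ℝ) / 2)) * (2 * (ν⁻¹ ^ i)) :=
          mul_le_mul_of_nonneg_right hlog hp
      _ = 2 * x * ((ν ^ i * ν⁻¹ ^ i) * (2 * ν ^ i - 1) ^ (-(1 : ℝ) / 2)) := by ring
      _ = 2 * x * (2 * ν ^ i - 1) ^ (-(1 : ℝ) / 2) := by
          rw [← mul_pow, mul_inv_cancel₀ hν0.ne', one_pow, one_mul]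
      _ ≤ 2 * x * r ^ i := by
          exact mul_le_mul_of_nonneg_left (hc i) (by positivity)
  have hg0 : ∀ i, 0 ≤ g i := by
    intro i
    exact mul_nonneg (Real.log_nonneg (ha1 i)) (by positivity)
  have hgeom : Summable fun i : ℕ => 2 * x * r ^ i :=
    (summable_geometric_of_lt_one hr0.le hr1).mul_left _
  have hgs : Summable g := Summable.of_nonneg_of_le hg0 hgb hgeom
  have hfeq : (fun i : ℕ =>
      (x * ν ^ i * (2 * ν ^ i - 1) ^ (-(1 : ℝ) / 2) + 1) ^ (2 * (ν⁻¹ ^ i) : ℝ)) =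
      fun i => Real.exp (g i) := by
    funext i
    rw [Real.rpow_def_of_pos (ha0 i)]
  have hprod : HasProd (fun i => Real.exp (g i)) (Real.exp (∑' i, g i)) :=
    hgs.hasSum.rexp
  constructor
  · rw [hfeq]; exact hprod.multipliable
  · intro _
    rw [hfeq, hprod.tprod_eq, Real.exp_le_exp]
    calc (∑' i, g i) ≤ ∑' i : ℕ, 2 * x * r ^ i := Summable.tsum_le_tsum hgb hgs hgeom
      _ = 2 * x * (1 - r)⁻¹ := by
          rw [tsum_mul_left, tsum_geometric_of_lt_one hr0.le hr1]
      _ = 2 * x * Real.sqrt ν / (Real.sqrt ν - 1) := by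
          rw [hr]
          have h0 : Real.sqrt ν ≠ 0 := by positivity
          have h1 : Real.sqrt ν - 1 ≠ 0 := by intro h; nlinarith
          field_simp
end
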